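/- In the canonical system associated with 𝒜_C, for every positive integer n the trajectory of n eventually enters the relevant interval: there exists i such that the i-th trajectory value n_i satisfies 0 ≤ n_i < b_i = 4^{i+1}, where n_0 = n and n_{j+1} = f_j(n_j). -/
import Mathlib


/-- The bases of the canonical collection `𝒜_C`: `b_i = 4^(i+1)`. -/
def bC (i : ℕ) : ℤ := 4 ^ (i + 1)

/-- The modified Collatz map: `g 0 = 0`, `g 1 = 0`, `g j = j/2` for even `j`,
and `g j = 3j + 1` for odd `j > 1`. -/
def gC (j : ℤ) : ℤ := if j = 1 then 0 else if 2 ∣ j then j / 2 else 3 * j + 1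

/-- The canonical system maps of `𝒜_C`: `f_i(n) = (n - t_i(n)) / b_i`, where
`t_i(n) = r - b_i · g(r)` with `r = n mod b_i ∈ [0, b_i)` is the unique element of
`T_i` congruent to `n` modulo `b_i`. -/
def fC (i : ℕ) (n : ℤ) : ℤ := (n - Int.emod n (bC i)) / bC i + gC (Int.emod n (bC i))

/-- The trajectory of `n` in the canonical system of `𝒜_C`:
`n_0 = n`, `n_{i+1} = f_i(n_i)`. -/
def trajC (n : ℤ) : ℕ → ℤ
  | 0 => n
  | i + 1 => fC i (trajC n i)

/-- In the canonical system of `𝒜_C`, the trajectory of every positive integer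
eventually enters the relevant interval: `0 ≤ n_i < b_i = 4^(i+1)` for some `i`. -/
lemma bC_pos (i : ℕ) : 0 < bC i := by unfold bC; positivity

lemma bC_ge4 (i : ℕ) : (4 : ℤ) ≤ bC i := by
  have : (4:ℤ)^1 ≤ 4^(i+1) := pow_le_pow_right₀ (by norm_num) (by omega)
  simpa [bC] using this

lemma gC_nonneg {r : ℤ} (hr : 0 ≤ r) : 0 ≤ gC r := by
  unfold gC
  split_ifs with h1 h2
  · exact le_refl 0
  · exact Int.ediv_nonneg hr (by norm_num)
  · linarith

lemma gC_le {r b : ℤ} (hb : 1 ≤ b) (h0 : 0 ≤ r) (h1 : r < b) : gC r ≤ 3 * b - 2 := by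
  unfold gC
  split_ifs with hr1 hr2
  · linarith
  · have := Int.ediv_le_self 2 h0
    linarith
  · linarith

lemma fC_eq (i : ℕ) (n : ℤ) : fC i n = n / bC i + gC (n % bC i) := by
  show (n - n % bC i) / bC i + gC (n % bC i) = _
  have h := Int.mul_ediv_add_emod n (bC i)
  have h2 : n - n % bC i = bC i * (n / bC i) := by omega
  rw [h2, Int.mul_ediv_cancel_left _ (bC_pos i).ne']

theorem trajC_eventually_enters_interval (n : ℤ) (hn : 0 < n) :
    ∃ i : ℕ, 0 ≤ trajC n i ∧ trajC n i < bC i := by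
  by_contra hc
  push_neg at hc
  set m := trajC n with hm
  have heq : ∀ i, m (i+1) = m i / bC i + gC (m i % bC i) := by
    intro i
    rw [show m (i+1) = fC i (m i) from rfl, fC_eq]
  have L : ∀ i, bC i ≤ m i := by
    intro i
    induction i with
    | zero => exact hc 0 hn.le
    | succ i ih =>
      have hb := bC_pos i
      have hr0 : 0 ≤ m i % bC i := Int.emod_nonneg _ hb.ne'
      have hdiv : 0 ≤ m i / bC i := Int.ediv_nonneg (le_trans hb.le ih) hb.le
      exact hc (i+1) (by rw [heq i]; exact add_nonneg hdiv (gC_nonneg hr0))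
  have U : ∀ i, m i ≤ n + 4 ^ (i + 2) := by
    intro i
    induction i with
    | zero =>
      have h16 : (0:ℤ) < 4 ^ (0+2) := by norm_num
      have : m 0 = n := rfl
      linarith
    | succ i ih =>
      have hb := bC_pos i
      have hr0 : 0 ≤ m i % bC i := Int.emod_nonneg _ hb.ne'
      have hr1 : m i % bC i < bC i := Int.emod_lt_of_pos _ hb
      have hg : gC (m i % bC i) ≤ 3 * bC i - 2 := gC_le (by linarith [bC_ge4 i]) hr0 hr1
      have hdl : bC i * (m i / bC i) ≤ m i := by
        have h := Int.mul_ediv_add_emod (m i) (bC i); omega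
      have hdiv0 : 0 ≤ m i / bC i := Int.ediv_nonneg (le_trans hb.le (L i)) hb.le
      have h4d : 4 * (m i / bC i) ≤ m i := by
        have hx : (0:ℤ) ≤ (bC i - 4) * (m i / bC i) :=
          mul_nonneg (by linarith [bC_ge4 i]) hdiv0
        nlinarith
      have hb_eq : bC i = 4 ^ (i+1) := rfl
      have e2 : (4:ℤ) ^ (i+2) = 4 * 4 ^ (i+1) := by ring
      have e3 : (4:ℤ) ^ (i+1+2) = 16 * 4 ^ (i+1) := by ring
      have hM := heq i
      linarith
  obtain ⟨k, hk⟩ := pow_unbounded_of_one_lt (n:ℤ) (by norm_num : (1:ℤ) < 4)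
  set i := k + 1 with hi
  have hni : n < 4 ^ i := lt_of_lt_of_le hk (pow_le_pow_right₀ (by norm_num) (Nat.le_succ k))
  have h4i : (4:ℤ) ≤ 4 ^ i := by
    calc (4:ℤ) = 4^1 := by norm_num
    _ ≤ 4^i := pow_le_pow_right₀ (by norm_num) (by omega)
  have hprod : (4:ℤ) * 4 ^ i ≤ 4 ^ i * 4 ^ i :=
    mul_le_mul_of_nonneg_right h4i (by positivity)
  have e2 : (4:ℤ) ^ (i+2) = 16 * 4 ^ i := by ring
  have e4 : bC i * bC i = 16 * (4 ^ i * 4 ^ i) := by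
    show (4:ℤ)^(i+1) * 4^(i+1) = _; ring
  have hsq : m i < bC i * bC i := by
    have := U i
    linarith
  have hb := bC_pos i
  have hdivlt : m i / bC i < bC i := (Int.ediv_lt_iff_lt_mul hb).2 hsq
  have hr0 : 0 ≤ m i % bC i := Int.emod_nonneg _ hb.ne'
  have hr1 : m i % bC i < bC i := Int.emod_lt_of_pos _ hb
  have hg : gC (m i % bC i) ≤ 3 * bC i - 2 := gC_le (by linarith [bC_ge4 i]) hr0 hr1
  have hbsucc : bC (i+1) = 4 * bC i := by
    show (4:ℤ)^(i+1+1) = 4 * 4^(i+1); ring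
  have hL := L (i+1)
  have hM := heq i
  linarith
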